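/- In the two-dimensional yarmulke Morse geometry the metric factorises as g_p(w,w) = −4(√(ζ−1)(p·w) − (p×w))(√(ζ−1)(p·w) + (p×w)) for every p ∈ N and w ∈ ℝ², where p·w is the Euclidean inner product and p×w = p₁w₂ − p₂w₁. Consequently, for any r₀ > 0 the logarithmic spirals t ↦ r₀ e^{t/√(ζ−1)}(cos t, sin t) and t ↦ r₀ e^{t/√(ζ−1)}(cos(−t), sin(−t)) are null curves (g(γ',γ') ≡ 0) whose tangent vectors satisfy the future-pointing condition p·γ'(t) > 0. -/

import Mathlib

noncomputable section

open Set

/-- The punctured disc `N = {p : 0 < |p| < ε}` (Euclidean norm). -/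
def NY (ε : ℝ) : Set (ℝ × ℝ) :=
  {p | 0 < p.1 ^ 2 + p.2 ^ 2 ∧ p.1 ^ 2 + p.2 ^ 2 < ε ^ 2}

/-- Euclidean dot product on ℝ². -/
def dot2 (a b : ℝ × ℝ) : ℝ := a.1 * b.1 + a.2 * b.2

/-- Planar cross product `p × w = p₁w₂ − p₂w₁`. -/
def cross2 (a b : ℝ × ℝ) : ℝ := a.1 * b.2 - a.2 * b.1

/-- The yarmulke Morse metric (quadratic form) built from `f(p) = |p|²`:
`g_p(w,w) = 4|p|²|w|² − 4ζ(p·w)²`. -/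
def gY (ζ : ℝ) (p w : ℝ × ℝ) : ℝ :=
  4 * dot2 p p * dot2 w w - 4 * ζ * dot2 p w ^ 2

/-- A future-directed timelike curve: a C¹ curve in `N` with everywhere timelike
tangent satisfying the future-pointing condition `γ(t)·γ'(t) > 0`. -/
def TimelikeY (ζ ε : ℝ) (γ γ' : ℝ → ℝ × ℝ) : Prop :=
  (∀ t ∈ Icc (0 : ℝ) 1, HasDerivAt γ (γ' t) t) ∧
  ContinuousOn γ' (Icc (0 : ℝ) 1) ∧
  (∀ t ∈ Icc (0 : ℝ) 1, γ t ∈ NY ε) ∧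
  (∀ t ∈ Icc (0 : ℝ) 1, gY ζ (γ t) (γ' t) < 0) ∧
  (∀ t ∈ Icc (0 : ℝ) 1, 0 < dot2 (γ t) (γ' t))

/-- The chronology relation `q ≪ p`. -/
def chronY (ζ ε : ℝ) (q p : ℝ × ℝ) : Prop :=
  ∃ γ γ', TimelikeY ζ ε γ γ' ∧ γ 0 = q ∧ γ 1 = p

def IplusY (ζ ε : ℝ) (q : ℝ × ℝ) : Set (ℝ × ℝ) := {p ∈ NY ε | chronY ζ ε q p}

def IminusY (ζ ε : ℝ) (q : ℝ × ℝ) : Set (ℝ × ℝ) := {p ∈ NY ε | chronY ζ ε p q}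

/-- The angle `φ_p ∈ (−π, π]` of a point of the plane. -/
def ang (p : ℝ × ℝ) : ℝ := Complex.arg ((p.1 : ℂ) + (p.2 : ℂ) * Complex.I)

theorem gY_eq_neg_four_mul {ζ s : ℝ} (hs : s ^ 2 = ζ - 1) (p w : ℝ × ℝ) :
    gY ζ p w = -4 * (s * dot2 p w - cross2 p w) * (s * dot2 p w + cross2 p w) := by
  simp only [gY, dot2, cross2]
  linear_combination 4 * (p.1 * w.1 + p.2 * w.2) ^ 2 * hs

theorem hasDerivAt_polar {ρ θ : ℝ → ℝ} {ρ' θ' t : ℝ} (hρ : HasDerivAt ρ ρ' t)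
    (hθ : HasDerivAt θ θ' t) :
    HasDerivAt (fun u => (ρ u * Real.cos (θ u), ρ u * Real.sin (θ u)))
      (ρ' * Real.cos (θ t) - ρ t * θ' * Real.sin (θ t),
        ρ' * Real.sin (θ t) + ρ t * θ' * Real.cos (θ t)) t :=
  ((hρ.mul hθ.cos).prodMk (hρ.mul hθ.sin)).congr_deriv (Prod.ext (by ring) (by ring))

theorem dot2_polar (r a r' a' : ℝ) :
    dot2 (r * Real.cos a, r * Real.sin a)
      (r' * Real.cos a - r * a' * Real.sin a, r' * Real.sin a + r * a' * Real.cos a) = r * r' := by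
  simp only [dot2]
  linear_combination r * r' * Real.sin_sq_add_cos_sq a

theorem cross2_polar (r a r' a' : ℝ) :
    cross2 (r * Real.cos a, r * Real.sin a)
      (r' * Real.cos a - r * a' * Real.sin a, r' * Real.sin a + r * a' * Real.cos a) =
      r ^ 2 * a' := by
  simp only [cross2]
  linear_combination r ^ 2 * a' * Real.sin_sq_add_cos_sq a

/-- For a logarithmic spiral `r₀ e^{u/s} (cos θ(u), sin θ(u))` the radial term `s (γ·γ')` equals
`|γ|²`, and unit angular speed makes the angular term `γ × γ'` equal `±|γ|²`, killing one factor
of `gY_eq_neg_four_mul`. -/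
theorem logSpiral_null_futurePointing {ζ s r0 σ t : ℝ} {θ : ℝ → ℝ} (hs : s ^ 2 = ζ - 1)
    (hs0 : 0 < s) (hr0 : r0 ≠ 0) (hσ : σ ^ 2 = 1) (hθ : HasDerivAt θ σ t) :
    DifferentiableAt ℝ
        (fun u => (r0 * Real.exp (u / s) * Real.cos (θ u), r0 * Real.exp (u / s) * Real.sin (θ u)))
        t ∧
      gY ζ (r0 * Real.exp (t / s) * Real.cos (θ t), r0 * Real.exp (t / s) * Real.sin (θ t))
        (deriv (fun u =>
          (r0 * Real.exp (u / s) * Real.cos (θ u), r0 * Real.exp (u / s) * Real.sin (θ u))) t) =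
        0 ∧
      0 < dot2 (r0 * Real.exp (t / s) * Real.cos (θ t), r0 * Real.exp (t / s) * Real.sin (θ t))
        (deriv (fun u =>
          (r0 * Real.exp (u / s) * Real.cos (θ u), r0 * Real.exp (u / s) * Real.sin (θ u))) t) := by
  have hρ : HasDerivAt (fun u => r0 * Real.exp (u / s)) (r0 * Real.exp (t / s) / s) t :=
    (((hasDerivAt_id' t).div_const s).exp.const_mul r0).congr_deriv (by ring)
  have hγ := hasDerivAt_polar hρ hθ
  have hr : r0 * Real.exp (t / s) ≠ 0 := mul_ne_zero hr0 (Real.exp_pos _).ne'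
  have hradial : s * (r0 * Real.exp (t / s) * (r0 * Real.exp (t / s) / s)) =
      (r0 * Real.exp (t / s)) ^ 2 := by
    field_simp
  refine ⟨hγ.differentiableAt, ?_, ?_⟩ <;> rw [hγ.deriv]
  · rw [gY_eq_neg_four_mul hs, dot2_polar, cross2_polar, hradial]
    linear_combination 4 * (r0 * Real.exp (t / s)) ^ 4 * hσ
  · rw [dot2_polar, ← mul_div_assoc]
    exact div_pos (mul_self_pos.mpr hr) hs0

theorem stmt5_general (ζ ε : ℝ) (hζ : 1 < ζ) (r0 : ℝ) (hr0 : 0 < r0) :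
    (∀ p ∈ NY ε, ∀ w : ℝ × ℝ,
      gY ζ p w =
        -4 * (Real.sqrt (ζ - 1) * dot2 p w - cross2 p w) *
          (Real.sqrt (ζ - 1) * dot2 p w + cross2 p w)) ∧
    (∀ t : ℝ,
      DifferentiableAt ℝ
        (fun s : ℝ =>
          ((r0 * Real.exp (s / Real.sqrt (ζ - 1)) * Real.cos s,
            r0 * Real.exp (s / Real.sqrt (ζ - 1)) * Real.sin s) : ℝ × ℝ)) t ∧
      gY ζ
        (r0 * Real.exp (t / Real.sqrt (ζ - 1)) * Real.cos t,
          r0 * Real.exp (t / Real.sqrt (ζ - 1)) * Real.sin t)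
        (deriv (fun s : ℝ =>
          ((r0 * Real.exp (s / Real.sqrt (ζ - 1)) * Real.cos s,
            r0 * Real.exp (s / Real.sqrt (ζ - 1)) * Real.sin s) : ℝ × ℝ)) t) = 0 ∧
      0 < dot2
        (r0 * Real.exp (t / Real.sqrt (ζ - 1)) * Real.cos t,
          r0 * Real.exp (t / Real.sqrt (ζ - 1)) * Real.sin t)
        (deriv (fun s : ℝ =>
          ((r0 * Real.exp (s / Real.sqrt (ζ - 1)) * Real.cos s,
            r0 * Real.exp (s / Real.sqrt (ζ - 1)) * Real.sin s) : ℝ × ℝ)) t)) ∧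
    (∀ t : ℝ,
      DifferentiableAt ℝ
        (fun s : ℝ =>
          ((r0 * Real.exp (s / Real.sqrt (ζ - 1)) * Real.cos (-s),
            r0 * Real.exp (s / Real.sqrt (ζ - 1)) * Real.sin (-s)) : ℝ × ℝ)) t ∧
      gY ζ
        (r0 * Real.exp (t / Real.sqrt (ζ - 1)) * Real.cos (-t),
          r0 * Real.exp (t / Real.sqrt (ζ - 1)) * Real.sin (-t))
        (deriv (fun s : ℝ =>
          ((r0 * Real.exp (s / Real.sqrt (ζ - 1)) * Real.cos (-s),
            r0 * Real.exp (s / Real.sqrt (ζ - 1)) * Real.sin (-s)) : ℝ × ℝ)) t) = 0 ∧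
      0 < dot2
        (r0 * Real.exp (t / Real.sqrt (ζ - 1)) * Real.cos (-t),
          r0 * Real.exp (t / Real.sqrt (ζ - 1)) * Real.sin (-t))
        (deriv (fun s : ℝ =>
          ((r0 * Real.exp (s / Real.sqrt (ζ - 1)) * Real.cos (-s),
            r0 * Real.exp (s / Real.sqrt (ζ - 1)) * Real.sin (-s)) : ℝ × ℝ)) t)) := by
  have hs : Real.sqrt (ζ - 1) ^ 2 = ζ - 1 := Real.sq_sqrt (by linarith)
  have hs0 : 0 < Real.sqrt (ζ - 1) := Real.sqrt_pos.mpr (by linarith)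
  exact ⟨fun p _ w => gY_eq_neg_four_mul hs p w,
    fun t => logSpiral_null_futurePointing hs hs0 hr0.ne' (one_pow 2) (hasDerivAt_id t),
    fun t => logSpiral_null_futurePointing hs hs0 hr0.ne' (by norm_num) (hasDerivAt_neg t)⟩

/-- the yarmulke metric factorises as
`g_p(w,w) = −4(√(ζ−1)(p·w) − p×w)(√(ζ−1)(p·w) + p×w)`, and consequently the two
logarithmic spirals `t ↦ r₀e^{t/√(ζ−1)}(cos(±t), sin(±t))` are null curves with
future-pointing tangents. -/
theorem stmt5 (ζ ε : ℝ) (hζ : 1 < ζ) (hε : 0 < ε) (r0 : ℝ) (hr0 : 0 < r0) :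
    (∀ p ∈ NY ε, ∀ w : ℝ × ℝ,
      gY ζ p w =
        -4 * (Real.sqrt (ζ - 1) * dot2 p w - cross2 p w) *
          (Real.sqrt (ζ - 1) * dot2 p w + cross2 p w)) ∧
    (∀ t : ℝ,
      DifferentiableAt ℝ
        (fun s : ℝ =>
          ((r0 * Real.exp (s / Real.sqrt (ζ - 1)) * Real.cos s,
            r0 * Real.exp (s / Real.sqrt (ζ - 1)) * Real.sin s) : ℝ × ℝ)) t ∧
      gY ζ
        (r0 * Real.exp (t / Real.sqrt (ζ - 1)) * Real.cos t,
          r0 * Real.exp (t / Real.sqrt (ζ - 1)) * Real.sin t)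
        (deriv (fun s : ℝ =>
          ((r0 * Real.exp (s / Real.sqrt (ζ - 1)) * Real.cos s,
            r0 * Real.exp (s / Real.sqrt (ζ - 1)) * Real.sin s) : ℝ × ℝ)) t) = 0 ∧
      0 < dot2
        (r0 * Real.exp (t / Real.sqrt (ζ - 1)) * Real.cos t,
          r0 * Real.exp (t / Real.sqrt (ζ - 1)) * Real.sin t)
        (deriv (fun s : ℝ =>
          ((r0 * Real.exp (s / Real.sqrt (ζ - 1)) * Real.cos s,
            r0 * Real.exp (s / Real.sqrt (ζ - 1)) * Real.sin s) : ℝ × ℝ)) t)) ∧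
    (∀ t : ℝ,
      DifferentiableAt ℝ
        (fun s : ℝ =>
          ((r0 * Real.exp (s / Real.sqrt (ζ - 1)) * Real.cos (-s),
            r0 * Real.exp (s / Real.sqrt (ζ - 1)) * Real.sin (-s)) : ℝ × ℝ)) t ∧
      gY ζ
        (r0 * Real.exp (t / Real.sqrt (ζ - 1)) * Real.cos (-t),
          r0 * Real.exp (t / Real.sqrt (ζ - 1)) * Real.sin (-t))
        (deriv (fun s : ℝ =>
          ((r0 * Real.exp (s / Real.sqrt (ζ - 1)) * Real.cos (-s),
            r0 * Real.exp (s / Real.sqrt (ζ - 1)) * Real.sin (-s)) : ℝ × ℝ)) t) = 0 ∧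
      0 < dot2
        (r0 * Real.exp (t / Real.sqrt (ζ - 1)) * Real.cos (-t),
          r0 * Real.exp (t / Real.sqrt (ζ - 1)) * Real.sin (-t))
        (deriv (fun s : ℝ =>
          ((r0 * Real.exp (s / Real.sqrt (ζ - 1)) * Real.cos (-s),
            r0 * Real.exp (s / Real.sqrt (ζ - 1)) * Real.sin (-s)) : ℝ × ℝ)) t)) :=
  stmt5_general ζ ε hζ r0 hr0
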